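/- arXiv:1605.08490 — 2 statements merged into one kernel-verified Lean document; each statement's English description precedes it below -/
import Mathlib

section
/- Let R ⊆ V with vol(R) ≤ vol(V\R), δ ≥ 0, ε = vol(R)/vol(V\R) + δ, and α > 0. If for some nonempty S ⊆ V with S ≠ V the quantity α·vol(R) + ∂S − α·vol(R∩S) + α·ε·vol((V\R)∩S) is strictly less than α·vol(R), then the conductance φ(S) = ∂S / min(vol(S), vol(V\S)) is strictly less than α. -/
/-!
Write `r = vol R / vol Rᶜ`, so that `0 ≤ r ≤ 1` and `r · vol Rᶜ = vol R`. The hypothesis on the cut says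
`∂S < α · x` with `x = vol (R ∩ S) - (r + δ) · vol (Rᶜ ∩ S)`. Clearly `x ≤ vol (R ∩ S) ≤ vol S`. Splitting
`R` and `Rᶜ` along `S` turns `vol (R ∩ S) - r · vol (Rᶜ ∩ S)` into `r · vol (Rᶜ ∩ Sᶜ) - vol (R ∩ Sᶜ)`,
which is at most `vol Sᶜ`. Hence `∂S < α · min (vol S) (vol Sᶜ)`.
-/

open Finset

variable {V : Type*} [Fintype V] [DecidableEq V]

/-- volume of a vertex set: sum of degrees -/
def vol (G : SimpleGraph V) [DecidableRel G.Adj] (S : Finset V) : ℝ :=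
  ∑ v ∈ S, (G.degree v : ℝ)

/-- number of edges between two (disjoint) vertex sets -/
def cutB (G : SimpleGraph V) [DecidableRel G.Adj] (A B : Finset V) : ℝ :=
  (((A ×ˢ B).filter fun p => G.Adj p.1 p.2).card : ℝ)

/-- boundary of S: number of edges from S to its complement -/
def bdry (G : SimpleGraph V) [DecidableRel G.Adj] (S : Finset V) : ℝ :=
  cutB G S Sᶜ

section Volume

variable (G : SimpleGraph V) [DecidableRel G.Adj]

lemma bdry_nonneg (S : Finset V) : 0 ≤ bdry G S :=
  Nat.cast_nonneg _

omit [DecidableEq V] in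
lemma vol_nonneg (S : Finset V) : 0 ≤ vol G S :=
  sum_nonneg fun _ _ => Nat.cast_nonneg _

omit [DecidableEq V] in
lemma vol_mono {A B : Finset V} (h : A ⊆ B) : vol G A ≤ vol G B :=
  sum_le_sum_of_subset_of_nonneg h fun _ _ _ => Nat.cast_nonneg _

lemma vol_inter_add_vol_inter_compl (A S : Finset V) :
    vol G (A ∩ S) + vol G (A ∩ Sᶜ) = vol G A := by
  rw [← sdiff_eq_inter_compl]
  exact sum_inter_add_sum_sdiff A S _

lemma vol_div_vol_compl_mul {R : Finset V} (hR : vol G R ≤ vol G Rᶜ) :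
    vol G R / vol G Rᶜ * vol G Rᶜ = vol G R :=
  div_mul_cancel_of_imp fun h => le_antisymm (h ▸ hR) (vol_nonneg G R)

lemma vol_div_vol_compl_le_one {R : Finset V} (hR : vol G R ≤ vol G Rᶜ) :
    vol G R / vol G Rᶜ ≤ 1 :=
  div_le_one_of_le₀ hR (vol_nonneg G Rᶜ)

lemma vol_inter_sub_ratio_mul_le_vol_compl {R : Finset V} (hR : vol G R ≤ vol G Rᶜ)
    (S : Finset V) :
    vol G (R ∩ S) - vol G R / vol G Rᶜ * vol G (Rᶜ ∩ S) ≤ vol G Sᶜ := by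
  set r := vol G R / vol G Rᶜ
  have hr : r ≤ 1 := vol_div_vol_compl_le_one G hR
  have hrR : r * vol G Rᶜ = vol G R := vol_div_vol_compl_mul G hR
  have hsplitR := vol_inter_add_vol_inter_compl G R S
  have hsplitRc := vol_inter_add_vol_inter_compl G Rᶜ S
  have hsplitSc : vol G (R ∩ Sᶜ) + vol G (Rᶜ ∩ Sᶜ) = vol G Sᶜ := by
    rw [inter_comm R, inter_comm Rᶜ]
    exact vol_inter_add_vol_inter_compl G Sᶜ R
  have hRcSc := vol_nonneg G (Rᶜ ∩ Sᶜ)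
  calc vol G (R ∩ S) - r * vol G (Rᶜ ∩ S)
      = r * vol G (Rᶜ ∩ Sᶜ) - vol G (R ∩ Sᶜ) := by linear_combination hsplitR - r * hsplitRc - hrR
    _ ≤ vol G (Rᶜ ∩ Sᶜ) := by linarith [mul_le_of_le_one_left hRcSc hr, vol_nonneg G (R ∩ Sᶜ)]
    _ ≤ vol G Sᶜ := by linarith [vol_nonneg G (R ∩ Sᶜ)]

end Volume

theorem cut_lt_implies_conductance_lt_general (G : SimpleGraph V) [DecidableRel G.Adj]
    (R S : Finset V) (α δ : ℝ) (hα : 0 < α) (hδ : 0 ≤ δ)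
    (hR : vol G R ≤ vol G Rᶜ)
    (hcut : α * vol G R + bdry G S - α * vol G (R ∩ S)
        + α * (vol G R / vol G Rᶜ + δ) * vol G (Rᶜ ∩ S) < α * vol G R) :
    bdry G S / min (vol G S) (vol G Sᶜ) < α := by
  set x := vol G (R ∩ S) - (vol G R / vol G Rᶜ + δ) * vol G (Rᶜ ∩ S)
  have hbdry : bdry G S < α * x := by linarith
  have hxS : x ≤ vol G S := by
    have : 0 ≤ (vol G R / vol G Rᶜ + δ) * vol G (Rᶜ ∩ S) :=
      mul_nonneg (add_nonneg (div_nonneg (vol_nonneg G R) (vol_nonneg G Rᶜ)) hδ) (vol_nonneg G _)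
    linarith [vol_mono G (inter_subset_right : R ∩ S ⊆ S)]
  have hxSc : x ≤ vol G Sᶜ := by
    linarith [vol_inter_sub_ratio_mul_le_vol_compl G hR S, mul_nonneg hδ (vol_nonneg G (Rᶜ ∩ S))]
  have hlt : bdry G S < α * min (vol G S) (vol G Sᶜ) :=
    hbdry.trans_le (mul_le_mul_of_nonneg_left (le_min hxS hxSc) hα.le)
  have hmin : 0 < min (vol G S) (vol G Sᶜ) :=
    pos_of_mul_pos_right ((bdry_nonneg G S).trans_lt hlt) hα.le
  rwa [div_lt_iff₀ hmin]

theorem cut_lt_implies_conductance_lt (G : SimpleGraph V) [DecidableRel G.Adj]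
    (R S : Finset V) (α δ : ℝ) (hα : 0 < α) (hδ : 0 ≤ δ)
    (hR : vol G R ≤ vol G Rᶜ)
    (hS : S.Nonempty) (hSne : S ≠ Finset.univ)
    (hvS : 0 < vol G S) (hvSc : 0 < vol G Sᶜ)
    (hcut : α * vol G R + bdry G S - α * vol G (R ∩ S)
        + α * (vol G R / vol G Rᶜ + δ) * vol G (Rᶜ ∩ S) < α * vol G R) :
    bdry G S / min (vol G S) (vol G Sᶜ) < α :=
  cut_lt_implies_conductance_lt_general G R S α δ hα hδ hR hcut
end

section
/- Let R ⊆ V with vol(R) ≤ vol(V\R), δ ≥ 0, ε = f(R)+δ where f(R)=vol(R)/vol(V\R). Suppose S* minimizes φ̄_R(S) = ∂S/(vol(R∩S) − ε·vol((V\R)∩S)) over all S with positive denominator, and suppose C ⊆ R has vol(C) > 0 and vol(C) ≤ vol(V\C). Then φ(S*) ≤ φ̄_R(S*) ≤ φ(C). -/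
open Finset

variable {V : Type*} [Fintype V] [DecidableEq V]

/-!
The denominator `relVol G R ε S = vol(R ∩ S) - ε vol(Rᶜ ∩ S)` of `φ̄_R` is at most `vol S`
because `ε ≥ 0`, and at most `vol Sᶜ` because `vol R ≤ min 1 ε · vol Rᶜ`; hence
`φ(S*) ≤ φ̄_R(S*)`. A set `C ⊆ R` has `relVol G R ε C = vol C`, so `φ̄_R(C) = φ(C)` once
`vol C ≤ vol Cᶜ`, and minimality of `S*` gives the second inequality.
-/

section RelVol

variable (G : SimpleGraph V) [DecidableRel G.Adj]

lemma vol_inter_add_vol_compl_inter (R S : Finset V) :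
    vol G (R ∩ S) + vol G (Rᶜ ∩ S) = vol G S := by
  rw [inter_comm R, inter_comm Rᶜ, ← sdiff_eq_inter_compl]
  exact sum_inter_add_sum_sdiff _ _ _

def relVol (R : Finset V) (ε : ℝ) (S : Finset V) : ℝ :=
  vol G (R ∩ S) - ε * vol G (Rᶜ ∩ S)

lemma relVol_of_subset {R C : Finset V} (ε : ℝ) (hC : C ⊆ R) : relVol G R ε C = vol G C := by
  have hRc : Rᶜ ∩ C = ∅ := disjoint_iff_inter_eq_empty.mp (disjoint_compl_left.mono_right hC)
  simp [relVol, inter_eq_right.mpr hC, hRc, vol]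

lemma relVol_le_vol (R : Finset V) {ε : ℝ} (hε : 0 ≤ ε) (S : Finset V) :
    relVol G R ε S ≤ vol G S := by
  unfold relVol
  linarith [vol_inter_add_vol_compl_inter G R S, vol_nonneg G (Rᶜ ∩ S),
    mul_nonneg hε (vol_nonneg G (Rᶜ ∩ S))]

lemma relVol_le_vol_compl {R : Finset V} {ε : ℝ} (hR : vol G R ≤ vol G Rᶜ)
    (hRε : vol G R ≤ ε * vol G Rᶜ) (S : Finset V) : relVol G R ε S ≤ vol G Sᶜ := by
  have hsplitR := vol_inter_add_vol_compl_inter G S R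
  have hsplitRc := vol_inter_add_vol_compl_inter G S Rᶜ
  have hsplitSc := vol_inter_add_vol_compl_inter G R Sᶜ
  rw [inter_comm S, inter_comm Sᶜ] at hsplitR hsplitRc
  have hb := vol_nonneg G (R ∩ Sᶜ)
  have hc := vol_nonneg G (Rᶜ ∩ S)
  have hd := vol_nonneg G (Rᶜ ∩ Sᶜ)
  unfold relVol
  rcases le_total 1 ε with h1 | h1
  · nlinarith [mul_le_mul_of_nonneg_right h1 hc]
  · nlinarith [mul_le_mul_of_nonneg_right h1 hd]

lemma relVol_le_min {R : Finset V} {ε : ℝ} (hε : 0 ≤ ε) (hR : vol G R ≤ vol G Rᶜ)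
    (hRε : vol G R ≤ ε * vol G Rᶜ) (S : Finset V) :
    relVol G R ε S ≤ min (vol G S) (vol G Sᶜ) :=
  le_min (relVol_le_vol G R hε S) (relVol_le_vol_compl G hR hRε S)

end RelVol

theorem minimizer_conductance_le_subset (G : SimpleGraph V) [DecidableRel G.Adj]
    (R C Sstar : Finset V) (δ ε : ℝ) (hδ : 0 ≤ δ) (hR : vol G R ≤ vol G Rᶜ)
    (hε : ε = vol G R / vol G Rᶜ + δ)
    (hdenom : 0 < vol G (R ∩ Sstar) - ε * vol G (Rᶜ ∩ Sstar))
    (hmin : ∀ S : Finset V,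
      0 < vol G (R ∩ S) - ε * vol G (Rᶜ ∩ S) →
      bdry G Sstar / (vol G (R ∩ Sstar) - ε * vol G (Rᶜ ∩ Sstar))
        ≤ bdry G S / (vol G (R ∩ S) - ε * vol G (Rᶜ ∩ S)))
    (hC : C ⊆ R) (hvC : 0 < vol G C) (hvCc : vol G C ≤ vol G Cᶜ) :
    bdry G Sstar / min (vol G Sstar) (vol G Sstarᶜ)
        ≤ bdry G Sstar / (vol G (R ∩ Sstar) - ε * vol G (Rᶜ ∩ Sstar)) ∧
    bdry G Sstar / (vol G (R ∩ Sstar) - ε * vol G (Rᶜ ∩ Sstar))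
        ≤ bdry G C / min (vol G C) (vol G Cᶜ) := by
  have hRc := vol_nonneg G Rᶜ
  have hε0 : 0 ≤ ε := hε ▸ add_nonneg (div_nonneg (vol_nonneg G R) hRc) hδ
  have hRε : vol G R ≤ ε * vol G Rᶜ := by
    rcases hRc.eq_or_lt with h | h
    · rw [← h] at hR ⊢
      simpa using hR
    · rw [hε, add_mul, div_mul_cancel₀ _ h.ne']
      linarith [mul_nonneg hδ hRc]
  have hCrel : relVol G R ε C = vol G C := relVol_of_subset G ε hC
  refine ⟨div_le_div_of_nonneg_left (bdry_nonneg G _) hdenom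
    (relVol_le_min G hε0 hR hRε Sstar), ?_⟩
  have hCpos : 0 < relVol G R ε C := hCrel ▸ hvC
  rw [min_eq_left hvCc, ← hCrel]
  exact hmin C hCpos
end
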